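/- arXiv:2402.19182 — 2 statements merged into one kernel-verified Lean document; each statement's English description precedes it below -/
import Mathlib

section
/- Let C : ℝ → ℝ be continuous and satisfy |C(x)| ≤ K·(1+|x|)^(−β) for some K > 0 and β > 1, and suppose C is a covariance function so that ∫_{-L}^{L}∫_{-L}^{L} C(x−x') dx dx' ≥ 0 for all L > 0 and ∫_ℝ C exists. If C is not identically zero, then ∫_ℝ (exp(C(x)) − 1) dx > 0. -/
/-!
The window variances `(2L)⁻¹ ∫_{-L}^{L} ∫_{-L}^{L} C (x - x')` are nonnegative and tend to `∫ C`,
so `∫ C ≥ 0`.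
Since `|C| ≤ K`, the strong convexity of `exp` on `[-K, K]` gives
`exp t - 1 ≥ t + (exp (-K) / 2) t²` there, so
`∫ (exp ∘ C - 1) ≥ ∫ C + (exp (-K) / 2) ∫ C² > 0`, the last integral being positive because `C`
is continuous and not identically zero.
-/

open MeasureTheory Filter Topology Set intervalIntegral

namespace Real

theorem sq_div_two_le_sub_one_mul_exp_add_one {s : ℝ} (hs : 0 ≤ s) :
    s ^ 2 / 2 ≤ (s - 1) * exp s + 1 := by
  let φ : ℝ → ℝ := fun u => (u - 1) * exp u + 1 - u ^ 2 / 2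
  have hφ' : ∀ u, HasDerivAt φ (u * (exp u - 1)) u := fun u =>
    (((((hasDerivAt_id' u).sub_const 1).mul (hasDerivAt_exp u)).add_const 1).sub
      ((hasDerivAt_pow 2 u).div_const 2)).congr_deriv (by push_cast; ring)
  have hmono : MonotoneOn φ (Ici 0) := by
    refine monotoneOn_of_hasDerivWithinAt_nonneg (convex_Ici 0)
      (continuous_iff_continuousAt.2 fun u => (hφ' u).continuousAt).continuousOn
      (fun u _ => (hφ' u).hasDerivWithinAt) fun u hu => ?_
    rw [interior_Ici] at hu
    exact mul_nonneg hu.out.le (sub_nonneg.2 (one_le_exp hu.out.le))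
  have := hmono self_mem_Ici hs hs
  norm_num [φ] at this
  linarith

theorem add_exp_neg_mul_sq_le_exp_sub_one {M t : ℝ} (ht : |t| ≤ M) :
    t + exp (-M) / 2 * t ^ 2 ≤ exp t - 1 := by
  have hexp : exp (-M) ≤ exp (-|t|) := exp_le_exp.2 (neg_le_neg ht)
  rcases le_or_gt 0 t with ht0 | ht0
  · have : exp (-M) ≤ 1 := hexp.trans (exp_le_one_iff.2 (neg_nonpos.2 (abs_nonneg t)))
    nlinarith [quadratic_le_exp_of_nonneg ht0, sq_nonneg t]
  · rw [abs_of_neg ht0, neg_neg] at hexp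
    have key := mul_le_mul_of_nonneg_left
      (sq_div_two_le_sub_one_mul_exp_add_one (neg_nonneg.2 ht0.le)) (exp_pos t).le
    have hinv : exp t * exp (-t) = 1 := by rw [← exp_add, add_neg_cancel, exp_zero]
    nlinarith [mul_le_mul_of_nonneg_right hexp (sq_nonneg t)]

theorem abs_exp_sub_one_le_exp_mul_abs {M t : ℝ} (ht : |t| ≤ M) :
    |exp t - 1| ≤ exp M * |t| := by
  rcases le_or_gt 0 t with ht0 | ht0
  · rw [abs_of_nonneg ht0] at ht ⊢
    rw [abs_of_nonneg (by linarith [add_one_le_exp t])]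
    have hinv : exp t * exp (-t) = 1 := by rw [← exp_add, add_neg_cancel, exp_zero]
    nlinarith [add_one_le_exp (-t), exp_le_exp.2 ht, exp_pos t]
  · rw [abs_of_neg ht0] at ht ⊢
    rw [abs_of_nonpos (by linarith [exp_lt_one_iff.2 ht0])]
    nlinarith [add_one_le_exp t, one_le_exp (show 0 ≤ M by linarith)]

end Real

namespace MeasureTheory.Integrable

section Bounded

variable {α : Type*} [MeasurableSpace α] {μ : Measure α} {f : α → ℝ} {M : ℝ}

theorem sq_of_abs_le (hf : Integrable f μ) (hM : ∀ x, |f x| ≤ M) :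
    Integrable (fun x => f x ^ 2) μ := by
  simpa only [sq] using hf.bdd_mul hf.aestronglyMeasurable (Eventually.of_forall hM)

theorem exp_sub_one_of_abs_le (hf : Integrable f μ) (hM : ∀ x, |f x| ≤ M) :
    Integrable (fun x => Real.exp (f x) - 1) μ := by
  refine (hf.abs.const_mul (Real.exp M)).mono'
    ((Real.continuous_exp.comp_aestronglyMeasurable hf.1).sub aestronglyMeasurable_const)
    (Eventually.of_forall fun x => ?_)
  exact Real.abs_exp_sub_one_le_exp_mul_abs (hM x)

theorem integral_add_mul_integral_sq_le_integral_exp_sub_one (hf : Integrable f μ)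
    (hM : ∀ x, |f x| ≤ M) :
    ∫ x, f x ∂μ + Real.exp (-M) / 2 * ∫ x, f x ^ 2 ∂μ ≤ ∫ x, (Real.exp (f x) - 1) ∂μ := by
  have hsq := (hf.sq_of_abs_le hM).const_mul (Real.exp (-M) / 2)
  rw [← integral_const_mul, ← integral_add hf hsq]
  exact integral_mono (hf.add hsq) (hf.exp_sub_one_of_abs_le hM)
    fun x => Real.add_exp_neg_mul_sq_le_exp_sub_one (hM x)

end Bounded

theorem continuous_intervalIntegral_comp {f : ℝ → ℝ} (hf : Integrable f) {a b : ℝ → ℝ}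
    (ha : Continuous a) (hb : Continuous b) :
    Continuous fun x => ∫ u in a x..b x, f u := by
  have hF := hf.continuous_primitive 0
  have : (fun x => ∫ u in a x..b x, f u) =
      fun x => (∫ u in 0..b x, f u) - ∫ u in 0..a x, f u :=
    funext fun x => (integral_interval_sub_left hf.intervalIntegrable hf.intervalIntegrable).symm
  rw [this]
  exact (hF.comp hb).sub (hF.comp ha)

end MeasureTheory.Integrable

theorem integral_integral_sub_eq_mul_integral_integral {f : ℝ → ℝ} {L : ℝ} (hL : 0 < L) :
    ∫ x in (-L)..L, ∫ x' in (-L)..L, f (x - x') =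
      L * ∫ s in (-1)..1, ∫ u in (L * s - L)..(L * s + L), f u := by
  have inner : ∀ x, ∫ x' in (-L)..L, f (x - x') = ∫ u in (x - L)..(x + L), f u := fun x => by
    rw [integral_comp_sub_left, sub_neg_eq_add]
  simp_rw [inner]
  rw [integral_comp_mul_left (fun x => ∫ u in (x - L)..(x + L), f u) hL.ne', smul_eq_mul,
    mul_inv_cancel_left₀ hL.ne', mul_neg_one, mul_one]

/-- After the substitution `x = L s`, the inner integral runs over `[L (s - 1), L (s + 1)]`, which
exhausts `ℝ` for every `s ∈ (-1, 1)`; dominated convergence in `s` does the rest. -/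
theorem MeasureTheory.Integrable.tendsto_integral_integral_sub_div {f : ℝ → ℝ}
    (hf : Integrable f) :
    Tendsto (fun L => (∫ x in (-L)..L, ∫ x' in (-L)..L, f (x - x')) / (2 * L)) atTop
      (𝓝 (∫ x, f x)) := by
  let F : ℝ → ℝ → ℝ := fun L s => ∫ u in (L * s - L)..(L * s + L), f u
  have hlim : ∀ s ∈ Ioo (-1 : ℝ) 1, Tendsto (fun L => F L s) atTop (𝓝 (∫ x, f x)) := by
    rintro s ⟨hs₁, hs₂⟩
    refine intervalIntegral_tendsto_integral hf ?_ ?_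
    · exact (tendsto_id.atTop_mul_const_of_neg (sub_neg.2 hs₂)).congr fun L => by
        simp only [id]; ring
    · exact (tendsto_id.atTop_mul_const (neg_lt_iff_pos_add.1 hs₁)).congr fun L => by
        simp only [id]; ring
  have hdom : Tendsto (fun L => ∫ s in (-1)..1, F L s) atTop
      (𝓝 (∫ s in (-1 : ℝ)..1, ∫ x, f x)) := by
    refine intervalIntegral.tendsto_integral_filter_of_dominated_convergence (fun _ => ∫ x, ‖f x‖)
      ?_ ?_ intervalIntegrable_const ?_
    · exact Eventually.of_forall fun L => (hf.continuous_intervalIntegral_comp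
        (by fun_prop) (by fun_prop)).aestronglyMeasurable
    · refine Eventually.of_forall fun L => Eventually.of_forall fun s _ => ?_
      exact norm_integral_le_integral_norm_uIoc.trans
        (setIntegral_le_integral hf.norm (Eventually.of_forall fun _ => norm_nonneg _))
    · filter_upwards [Measure.ae_ne volume 1] with s hs hsI
      exact hlim s ⟨by simpa using hsI.1, lt_of_le_of_ne (by simpa using hsI.2) hs⟩
  have hmean : Tendsto (fun L => (∫ s in (-1)..1, F L s) / 2) atTop (𝓝 (∫ x, f x)) := by
    simpa [one_add_one_eq_two] using hdom.div_const 2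
  refine hmean.congr' ((eventually_gt_atTop 0).mono fun L hL => ?_)
  dsimp only
  rw [integral_integral_sub_eq_mul_integral_integral hL, mul_comm 2 L,
    mul_div_mul_left _ _ hL.ne']

theorem MeasureTheory.Integrable.integral_nonneg_of_integral_integral_sub_nonneg {f : ℝ → ℝ}
    (hf : Integrable f) (hpos : ∀ L : ℝ, 0 < L → 0 ≤ ∫ x in (-L)..L, ∫ x' in (-L)..L, f (x - x')) :
    0 ≤ ∫ x, f x :=
  ge_of_tendsto hf.tendsto_integral_integral_sub_div <| (eventually_gt_atTop 0).mono
    fun L hL => div_nonneg (hpos L hL) (by positivity)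

theorem integral_exp_sub_one_pos (C : ℝ → ℝ) (K β : ℝ) (hK : 0 < K) (hβ : 1 < β)
    (hcont : Continuous C) (hbound : ∀ x : ℝ, |C x| ≤ K * (1 + |x|) ^ (-β))
    (hint : Integrable C)
    (hposdef : ∀ L : ℝ, 0 < L →
      0 ≤ ∫ x in (-L)..L, ∫ x' in (-L)..L, C (x - x'))
    (hne : C ≠ 0) :
    0 < ∫ x : ℝ, (Real.exp (C x) - 1) := by
  have hbdd : ∀ x, |C x| ≤ K := fun x => (hbound x).trans <| mul_le_of_le_one_right hK.le <|
    Real.rpow_le_one_of_one_le_of_nonpos (by linarith [abs_nonneg x]) (by linarith)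
  have hmean : 0 ≤ ∫ x, C x := hint.integral_nonneg_of_integral_integral_sub_nonneg hposdef
  obtain ⟨x₀, hx₀⟩ := Function.ne_iff.1 hne
  have hsq : 0 < ∫ x, C x ^ 2 := integral_pos_of_integrable_nonneg_nonzero (hcont.pow 2)
    (hint.sq_of_abs_le hbdd) (fun x => sq_nonneg (C x)) (pow_ne_zero 2 hx₀)
  have hconvex := hint.integral_add_mul_integral_sq_le_integral_exp_sub_one hbdd
  have : 0 < Real.exp (-K) / 2 * ∫ x, C x ^ 2 := by positivity
  linarith
end

section
/- Let α₁, α₂, α₃, α₄ be real-valued random variables in L³ that are uniformly bounded by a constant M, with means ᾱᵢ = E[αᵢ]. Set α₀ = α₁ − α₂α₃α₄ and ᾱ₀ = E[α₀]. Then |Var(α₀) − Var(α₁ − α₂ᾱ₃ᾱ₄ − α₃ᾱ₂ᾱ₄ − α₄ᾱ₂ᾱ₃)| ≤ C(M)·Σᵢ₌₁⁴ E[|αᵢ − ᾱᵢ|³] for a constant C(M) depending only on M. -/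
open MeasureTheory ProbabilityTheory

private lemma cube3 (a b c : ℝ) (ha : 0 ≤ a) (hb : 0 ≤ b) (hc : 0 ≤ c) :
    3 * (a * b * c) ≤ a ^ 3 + b ^ 3 + c ^ 3 := by
  nlinarith [mul_nonneg (add_nonneg (add_nonneg ha hb) hc)
      (add_nonneg (add_nonneg (sq_nonneg (a - b)) (sq_nonneg (b - c))) (sq_nonneg (a - c)))]

private lemma tri3 (x y z s : ℝ) (hx : 0 ≤ x) (hy : 0 ≤ y) (hz : 0 ≤ z)
    (hxs : x ^ 3 ≤ s) (hys : y ^ 3 ≤ s) (hzs : z ^ 3 ≤ s) : x * y * z ≤ 3 * s := by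
  nlinarith [cube3 x y z hx hy hz, pow_nonneg hx 3]

private lemma abs4s (a b c d : ℝ) : |a - b - c - d| ≤ |a| + |b| + |c| + |d| := by
  rw [abs_le]
  constructor <;>
    [nlinarith [neg_abs_le a, le_abs_self b, le_abs_self c, le_abs_self d];
     nlinarith [le_abs_self a, neg_abs_le b, neg_abs_le c, neg_abs_le d]]

private lemma abs4a (a b c d : ℝ) : |a + b + c + d| ≤ |a| + |b| + |c| + |d| := by
  rw [abs_le]
  constructor <;>
    [nlinarith [neg_abs_le a, neg_abs_le b, neg_abs_le c, neg_abs_le d];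
     nlinarith [le_abs_self a, le_abs_self b, le_abs_self c, le_abs_self d]]

private lemma abs3m (a b c : ℝ) : |a - b + c| ≤ |a| + |b| + |c| := by
  rw [abs_le]
  constructor <;>
    [nlinarith [neg_abs_le a, le_abs_self b, neg_abs_le c];
     nlinarith [le_abs_self a, neg_abs_le b, le_abs_self c]]

private lemma key3 {M : ℝ} (u v w : ℝ) (hu : |u| ≤ M) (hv : |v| ≤ M) (hw : |w| ≤ M) :
    |u * v * w| ≤ M ^ 3 := by
  have h0 : (0:ℝ) ≤ M := (abs_nonneg u).trans hu
  rw [abs_mul, abs_mul]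
  calc |u| * |v| * |w| ≤ M * M * M := by
        apply mul_le_mul (mul_le_mul hu hv (abs_nonneg v) h0) hw (abs_nonneg w)
        positivity
    _ = M ^ 3 := by ring

private lemma key2 {M : ℝ} (u v : ℝ) (hu : |u| ≤ M) (hv : |v| ≤ M) (x : ℝ) :
    |u * v * x| ≤ M ^ 2 * |x| := by
  have h0 : (0:ℝ) ≤ M := (abs_nonneg u).trans hu
  rw [abs_mul, abs_mul]
  calc |u| * |v| * |x| ≤ M * M * |x| :=
        mul_le_mul_of_nonneg_right (mul_le_mul hu hv (abs_nonneg v) h0) (abs_nonneg x)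
    _ = M ^ 2 * |x| := by ring

private lemma int_of_bdd {Ω : Type} [MeasurableSpace Ω] {μ : Measure Ω} [IsProbabilityMeasure μ]
    {f : Ω → ℝ} (hf : AEMeasurable f μ) {K : ℝ} (h : ∀ᵐ ω ∂μ, |f ω| ≤ K) :
    Integrable f μ :=
  (MemLp.of_bound (p := 1) hf.aestronglyMeasurable K
    (by simpa [Real.norm_eq_abs] using h)).integrable le_rfl

set_option maxHeartbeats 1000000 in
private lemma poly_bound {M b1 b2 b3 b4 : ℝ} (hM : 0 < M)
    (h1 : 0 ≤ b1) (h2 : 0 ≤ b2) (h3 : 0 ≤ b3) (h4 : 0 ≤ b4)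
    (g2 : b2 ≤ 2*M) (g3 : b3 ≤ 2*M) (g4 : b4 ≤ 2*M) :
    2*((b1 + M^2*(b2+b3+b4)) * (3*M*(b2*b3+b2*b4+b3*b4)))
      + (3*M*(b2*b3+b2*b4+b3*b4))^2
      ≤ (54*M + 648*M^3) * (b1^3+b2^3+b3^3+b4^3) := by
  set S := b1^3+b2^3+b3^3+b4^3 with hS
  have c1 : b1^3 ≤ S := by
    simp only [hS]; nlinarith [pow_nonneg h2 3, pow_nonneg h3 3, pow_nonneg h4 3]
  have c2 : b2^3 ≤ S := by
    simp only [hS]; nlinarith [pow_nonneg h1 3, pow_nonneg h3 3, pow_nonneg h4 3]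
  have c3 : b3^3 ≤ S := by
    simp only [hS]; nlinarith [pow_nonneg h1 3, pow_nonneg h2 3, pow_nonneg h4 3]
  have c4 : b4^3 ≤ S := by
    simp only [hS]; nlinarith [pow_nonneg h1 3, pow_nonneg h2 3, pow_nonneg h3 3]
  have T123 := tri3 b1 b2 b3 S h1 h2 h3 c1 c2 c3
  have T124 := tri3 b1 b2 b4 S h1 h2 h4 c1 c2 c4
  have T134 := tri3 b1 b3 b4 S h1 h3 h4 c1 c3 c4
  have T223 := tri3 b2 b2 b3 S h2 h2 h3 c2 c2 c3
  have T224 := tri3 b2 b2 b4 S h2 h2 h4 c2 c2 c4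
  have T233 := tri3 b2 b3 b3 S h2 h3 h3 c2 c3 c3
  have T234 := tri3 b2 b3 b4 S h2 h3 h4 c2 c3 c4
  have T244 := tri3 b2 b4 b4 S h2 h4 h4 c2 c4 c4
  have T334 := tri3 b3 b3 b4 S h3 h3 h4 c3 c3 c4
  have T344 := tri3 b3 b4 b4 S h3 h4 h4 c3 c4 c4
  have hM6 : (0:ℝ) ≤ 6*M := by positivity
  have hM63 : (0:ℝ) ≤ 6*M^3 := by positivity
  have hM92 : (0:ℝ) ≤ 9*M^2 := by positivity
  have P123 := mul_le_mul_of_nonneg_left T123 hM6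
  have P124 := mul_le_mul_of_nonneg_left T124 hM6
  have P134 := mul_le_mul_of_nonneg_left T134 hM6
  have B223 := mul_le_mul_of_nonneg_left T223 hM63
  have B224 := mul_le_mul_of_nonneg_left T224 hM63
  have B233 := mul_le_mul_of_nonneg_left T233 hM63
  have B234 := mul_le_mul_of_nonneg_left T234 hM63
  have B244 := mul_le_mul_of_nonneg_left T244 hM63
  have B334 := mul_le_mul_of_nonneg_left T334 hM63
  have B344 := mul_le_mul_of_nonneg_left T344 hM63
  have h2M : (0:ℝ) ≤ 2*M := by positivity
  have Q2233 : b2 * (b2*b3*b3) ≤ (2*M) * (3*S) :=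
    mul_le_mul g2 T233 (mul_nonneg (mul_nonneg h2 h3) h3) h2M
  have Q2244 : b2 * (b2*b4*b4) ≤ (2*M) * (3*S) :=
    mul_le_mul g2 T244 (mul_nonneg (mul_nonneg h2 h4) h4) h2M
  have Q3344 : b3 * (b3*b4*b4) ≤ (2*M) * (3*S) :=
    mul_le_mul g3 T344 (mul_nonneg (mul_nonneg h3 h4) h4) h2M
  have Q2234 : b2 * (b2*b3*b4) ≤ (2*M) * (3*S) :=
    mul_le_mul g2 T234 (mul_nonneg (mul_nonneg h2 h3) h4) h2M
  have Q2334 : b3 * (b2*b3*b4) ≤ (2*M) * (3*S) :=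
    mul_le_mul g3 T234 (mul_nonneg (mul_nonneg h2 h3) h4) h2M
  have Q2344 : b4 * (b2*b3*b4) ≤ (2*M) * (3*S) :=
    mul_le_mul g4 T234 (mul_nonneg (mul_nonneg h2 h3) h4) h2M
  have R2233 := mul_le_mul_of_nonneg_left Q2233 hM92
  have R2244 := mul_le_mul_of_nonneg_left Q2244 hM92
  have R3344 := mul_le_mul_of_nonneg_left Q3344 hM92
  have R2234 := mul_le_mul_of_nonneg_left Q2234 hM92
  have R2334 := mul_le_mul_of_nonneg_left Q2334 hM92
  have R2344 := mul_le_mul_of_nonneg_left Q2344 hM92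
  linarith [P123, P124, P134, B223, B224, B233, B234, B244, B334, B344,
    R2233, R2244, R3344, R2234, R2334, R2344]

set_option maxHeartbeats 2000000 in
theorem variance_product_linearization (M : ℝ) (hM : 0 < M) :
    ∃ C : ℝ, 0 < C ∧
      ∀ (Ω : Type) (_ : MeasurableSpace Ω) (μ : Measure Ω),
        IsProbabilityMeasure μ →
        ∀ α₁ α₂ α₃ α₄ : Ω → ℝ,
        AEMeasurable α₁ μ → AEMeasurable α₂ μ → AEMeasurable α₃ μ → AEMeasurable α₄ μ →
        (∀ᵐ ω ∂μ, |α₁ ω| ≤ M) → (∀ᵐ ω ∂μ, |α₂ ω| ≤ M) →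
        (∀ᵐ ω ∂μ, |α₃ ω| ≤ M) → (∀ᵐ ω ∂μ, |α₄ ω| ≤ M) →
        |variance (fun ω => α₁ ω - α₂ ω * α₃ ω * α₄ ω) μ -
          variance (fun ω =>
            α₁ ω - α₂ ω * (∫ ω', α₃ ω' ∂μ) * (∫ ω', α₄ ω' ∂μ)
              - α₃ ω * (∫ ω', α₂ ω' ∂μ) * (∫ ω', α₄ ω' ∂μ)
              - α₄ ω * (∫ ω', α₂ ω' ∂μ) * (∫ ω', α₃ ω' ∂μ)) μ| ≤
        C * ((∫ ω, |α₁ ω - ∫ ω', α₁ ω' ∂μ| ^ 3 ∂μ) +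
             (∫ ω, |α₂ ω - ∫ ω', α₂ ω' ∂μ| ^ 3 ∂μ) +
             (∫ ω, |α₃ ω - ∫ ω', α₃ ω' ∂μ| ^ 3 ∂μ) +
             (∫ ω, |α₄ ω - ∫ ω', α₄ ω' ∂μ| ^ 3 ∂μ)) := by
  refine ⟨54*M + 648*M^3, by positivity, ?_⟩
  intro Ω mΩ μ hμ α₁ α₂ α₃ α₄ h₁ h₂ h₃ h₄ hb₁ hb₂ hb₃ hb₄
  set m₁ := ∫ ω', α₁ ω' ∂μ with hm₁def
  set m₂ := ∫ ω', α₂ ω' ∂μ with hm₂def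
  set m₃ := ∫ ω', α₃ ω' ∂μ with hm₃def
  set m₄ := ∫ ω', α₄ ω' ∂μ with hm₄def
  have iα₁ : Integrable α₁ μ := int_of_bdd h₁ hb₁
  have iα₂ : Integrable α₂ μ := int_of_bdd h₂ hb₂
  have iα₃ : Integrable α₃ μ := int_of_bdd h₃ hb₃
  have iα₄ : Integrable α₄ μ := int_of_bdd h₄ hb₄
  have hm₁M : |m₁| ≤ M := by
    rw [hm₁def, ← Real.norm_eq_abs]
    have := norm_integral_le_of_norm_le_const (μ := μ) (f := fun ω' => α₁ ω') (C := M)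
      (by simpa [Real.norm_eq_abs] using hb₁)
    simpa using this
  have hm₂M : |m₂| ≤ M := by
    rw [hm₂def, ← Real.norm_eq_abs]
    have := norm_integral_le_of_norm_le_const (μ := μ) (f := fun ω' => α₂ ω') (C := M)
      (by simpa [Real.norm_eq_abs] using hb₂)
    simpa using this
  have hm₃M : |m₃| ≤ M := by
    rw [hm₃def, ← Real.norm_eq_abs]
    have := norm_integral_le_of_norm_le_const (μ := μ) (f := fun ω' => α₃ ω') (C := M)
      (by simpa [Real.norm_eq_abs] using hb₃)
    simpa using this
  have hm₄M : |m₄| ≤ M := by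
    rw [hm₄def, ← Real.norm_eq_abs]
    have := norm_integral_le_of_norm_le_const (μ := μ) (f := fun ω' => α₄ ω') (C := M)
      (by simpa [Real.norm_eq_abs] using hb₄)
    simpa using this
  have iβ₁ : Integrable (fun ω => α₁ ω - m₁) μ := iα₁.sub (integrable_const _)
  have iβ₂ : Integrable (fun ω => α₂ ω - m₂) μ := iα₂.sub (integrable_const _)
  have iβ₃ : Integrable (fun ω => α₃ ω - m₃) μ := iα₃.sub (integrable_const _)
  have iβ₄ : Integrable (fun ω => α₄ ω - m₄) μ := iα₄.sub (integrable_const _)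
  have hIβ₁ : ∫ ω, (α₁ ω - m₁) ∂μ = 0 := by
    rw [integral_sub iα₁ (integrable_const _), integral_const]; simp [hm₁def]
  have hIβ₂ : ∫ ω, (α₂ ω - m₂) ∂μ = 0 := by
    rw [integral_sub iα₂ (integrable_const _), integral_const]; simp [hm₂def]
  have hIβ₃ : ∫ ω, (α₃ ω - m₃) ∂μ = 0 := by
    rw [integral_sub iα₃ (integrable_const _), integral_const]; simp [hm₃def]
  have hIβ₄ : ∫ ω, (α₄ ω - m₄) ∂μ = 0 := by
    rw [integral_sub iα₄ (integrable_const _), integral_const]; simp [hm₄def]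
  set Z : Ω → ℝ := fun ω =>
    (α₁ ω - m₁) - m₃*m₄*(α₂ ω - m₂) - m₂*m₄*(α₃ ω - m₃) - m₂*m₃*(α₄ ω - m₄) with hZdef
  set R : Ω → ℝ := fun ω =>
    m₄*((α₂ ω - m₂)*(α₃ ω - m₃)) + m₃*((α₂ ω - m₂)*(α₄ ω - m₄))
      + m₂*((α₃ ω - m₃)*(α₄ ω - m₄)) + (α₂ ω - m₂)*((α₃ ω - m₃)*(α₄ ω - m₄)) with hRdef
  have hZm : AEMeasurable Z μ := by rw [hZdef]; fun_prop
  have hRm : AEMeasurable R μ := by rw [hRdef]; fun_prop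
  have hae : ∀ᵐ ω ∂μ, |α₁ ω - m₁| ≤ 2*M ∧ |α₂ ω - m₂| ≤ 2*M ∧
      |α₃ ω - m₃| ≤ 2*M ∧ |α₄ ω - m₄| ≤ 2*M := by
    filter_upwards [hb₁, hb₂, hb₃, hb₄] with ω w1 w2 w3 w4
    exact ⟨(abs_sub _ _).trans (by linarith), (abs_sub _ _).trans (by linarith),
      (abs_sub _ _).trans (by linarith), (abs_sub _ _).trans (by linarith)⟩
  have hZbd : ∀ ω, |Z ω| ≤ |α₁ ω - m₁|
      + M^2*(|α₂ ω - m₂| + |α₃ ω - m₃| + |α₄ ω - m₄|) := by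
    intro ω
    simp only [hZdef]
    refine (abs4s _ _ _ _).trans ?_
    have k2 := key2 m₃ m₄ hm₃M hm₄M (α₂ ω - m₂)
    have k3 := key2 m₂ m₄ hm₂M hm₄M (α₃ ω - m₃)
    have k4 := key2 m₂ m₃ hm₂M hm₃M (α₄ ω - m₄)
    linarith
  have hRbd : ∀ᵐ ω ∂μ, |R ω| ≤ 3*M*(|α₂ ω - m₂| * |α₃ ω - m₃|
      + |α₂ ω - m₂| * |α₄ ω - m₄| + |α₃ ω - m₃| * |α₄ ω - m₄|) := by
    filter_upwards [hae] with ω hw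
    obtain ⟨w1, w2, w3, w4⟩ := hw
    simp only [hRdef]
    refine (abs4a _ _ _ _).trans ?_
    simp only [abs_mul]
    have t1 : |m₄| * (|α₂ ω - m₂| * |α₃ ω - m₃|) ≤ M * (|α₂ ω - m₂| * |α₃ ω - m₃|) :=
      mul_le_mul_of_nonneg_right hm₄M (mul_nonneg (abs_nonneg _) (abs_nonneg _))
    have t2 : |m₃| * (|α₂ ω - m₂| * |α₄ ω - m₄|) ≤ M * (|α₂ ω - m₂| * |α₄ ω - m₄|) :=
      mul_le_mul_of_nonneg_right hm₃M (mul_nonneg (abs_nonneg _) (abs_nonneg _))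
    have t3 : |m₂| * (|α₃ ω - m₃| * |α₄ ω - m₄|) ≤ M * (|α₃ ω - m₃| * |α₄ ω - m₄|) :=
      mul_le_mul_of_nonneg_right hm₂M (mul_nonneg (abs_nonneg _) (abs_nonneg _))
    have t4 : |α₂ ω - m₂| * (|α₃ ω - m₃| * |α₄ ω - m₄|)
        ≤ (2*M) * (|α₃ ω - m₃| * |α₄ ω - m₄|) :=
      mul_le_mul_of_nonneg_right w2 (mul_nonneg (abs_nonneg _) (abs_nonneg _))
    have n1 : 0 ≤ M * (|α₂ ω - m₂| * |α₃ ω - m₃|) :=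
      mul_nonneg hM.le (mul_nonneg (abs_nonneg _) (abs_nonneg _))
    have n2 : 0 ≤ M * (|α₂ ω - m₂| * |α₄ ω - m₄|) :=
      mul_nonneg hM.le (mul_nonneg (abs_nonneg _) (abs_nonneg _))
    linarith
  have hZK : ∀ᵐ ω ∂μ, |Z ω| ≤ 2*M + 6*M^3 := by
    filter_upwards [hae] with ω hw
    obtain ⟨w1, w2, w3, w4⟩ := hw
    have := hZbd ω
    nlinarith [sq_nonneg M]
  have hRK : ∀ᵐ ω ∂μ, |R ω| ≤ 36*M^3 := by
    filter_upwards [hae, hRbd] with ω hw hR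
    obtain ⟨w1, w2, w3, w4⟩ := hw
    have q1 : |α₂ ω - m₂| * |α₃ ω - m₃| ≤ (2*M)*(2*M) :=
      mul_le_mul w2 w3 (abs_nonneg _) (by positivity)
    have q2 : |α₂ ω - m₂| * |α₄ ω - m₄| ≤ (2*M)*(2*M) :=
      mul_le_mul w2 w4 (abs_nonneg _) (by positivity)
    have q3 : |α₃ ω - m₃| * |α₄ ω - m₄| ≤ (2*M)*(2*M) :=
      mul_le_mul w3 w4 (abs_nonneg _) (by positivity)
    nlinarith [hM.le]
  have iZ : Integrable Z μ := int_of_bdd hZm hZK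
  have iR : Integrable R μ := int_of_bdd hRm hRK
  have iZR : Integrable (fun ω => Z ω * R ω) μ := by
    refine int_of_bdd (hZm.mul hRm) (K := (2*M + 6*M^3) * (36*M^3)) ?_
    filter_upwards [hZK, hRK] with ω u v
    rw [abs_mul]
    exact mul_le_mul u v (abs_nonneg _) (by positivity)
  have iaZR : Integrable (fun ω => |Z ω * R ω|) μ := iZR.abs
  have iR2 : Integrable (fun ω => R ω ^ 2) μ := by
    refine int_of_bdd (by fun_prop) (K := (36*M^3)^2) ?_
    filter_upwards [hRK] with ω v
    rw [abs_pow, ← abs_pow]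
    calc |R ω ^ 2| = |R ω| ^ 2 := abs_pow _ _
      _ ≤ (36*M^3)^2 := pow_le_pow_left₀ (abs_nonneg _) v 2
  have iZ2 : Integrable (fun ω => Z ω ^ 2) μ := by
    refine int_of_bdd (by fun_prop) (K := (2*M + 6*M^3)^2) ?_
    filter_upwards [hZK] with ω v
    calc |Z ω ^ 2| = |Z ω| ^ 2 := abs_pow _ _
      _ ≤ (2*M + 6*M^3)^2 := pow_le_pow_left₀ (abs_nonneg _) v 2
  set r := ∫ ω, R ω ∂μ with hrdef
  have hrK : |r| ≤ 36*M^3 := by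
    rw [hrdef, ← Real.norm_eq_abs]
    have := norm_integral_le_of_norm_le_const (μ := μ) (f := fun ω => R ω) (C := 36*M^3)
      (by simpa [Real.norm_eq_abs] using hRK)
    simpa using this
  have iRr2 : Integrable (fun ω => (R ω - r) ^ 2) μ := by
    refine int_of_bdd (by fun_prop) (K := (72*M^3)^2) ?_
    filter_upwards [hRK] with ω v
    have : |R ω - r| ≤ 72*M^3 := (abs_sub _ _).trans (by linarith)
    calc |(R ω - r) ^ 2| = |R ω - r| ^ 2 := abs_pow _ _
      _ ≤ (72*M^3)^2 := pow_le_pow_left₀ (abs_nonneg _) this 2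
  have iZRr2 : Integrable (fun ω => (Z ω - R ω + r) ^ 2) μ := by
    refine int_of_bdd (by fun_prop) (K := (2*M + 78*M^3)^2) ?_
    filter_upwards [hZK, hRK] with ω u v
    have : |Z ω - R ω + r| ≤ 2*M + 78*M^3 := (abs3m _ _ _).trans (by linarith)
    calc |(Z ω - R ω + r) ^ 2| = |Z ω - R ω + r| ^ 2 := abs_pow _ _
      _ ≤ (2*M + 78*M^3)^2 := pow_le_pow_left₀ (abs_nonneg _) this 2
  have icube₁ : Integrable (fun ω => |α₁ ω - m₁| ^ 3) μ := by
    refine int_of_bdd (by fun_prop) (K := (2*M)^3) ?_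
    filter_upwards [hae] with ω hw
    calc |(|α₁ ω - m₁| ^ 3)| = |α₁ ω - m₁| ^ 3 := abs_of_nonneg (by positivity)
      _ ≤ (2*M)^3 := pow_le_pow_left₀ (abs_nonneg _) hw.1 3
  have icube₂ : Integrable (fun ω => |α₂ ω - m₂| ^ 3) μ := by
    refine int_of_bdd (by fun_prop) (K := (2*M)^3) ?_
    filter_upwards [hae] with ω hw
    calc |(|α₂ ω - m₂| ^ 3)| = |α₂ ω - m₂| ^ 3 := abs_of_nonneg (by positivity)
      _ ≤ (2*M)^3 := pow_le_pow_left₀ (abs_nonneg _) hw.2.1 3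
  have icube₃ : Integrable (fun ω => |α₃ ω - m₃| ^ 3) μ := by
    refine int_of_bdd (by fun_prop) (K := (2*M)^3) ?_
    filter_upwards [hae] with ω hw
    calc |(|α₃ ω - m₃| ^ 3)| = |α₃ ω - m₃| ^ 3 := abs_of_nonneg (by positivity)
      _ ≤ (2*M)^3 := pow_le_pow_left₀ (abs_nonneg _) hw.2.2.1 3
  have icube₄ : Integrable (fun ω => |α₄ ω - m₄| ^ 3) μ := by
    refine int_of_bdd (by fun_prop) (K := (2*M)^3) ?_
    filter_upwards [hae] with ω hw
    calc |(|α₄ ω - m₄| ^ 3)| = |α₄ ω - m₄| ^ 3 := abs_of_nonneg (by positivity)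
      _ ≤ (2*M)^3 := pow_le_pow_left₀ (abs_nonneg _) hw.2.2.2 3
  -- integral of Z is zero
  have ic₂ : Integrable (fun ω => m₃*m₄*(α₂ ω - m₂)) μ := iβ₂.const_mul _
  have ic₃ : Integrable (fun ω => m₂*m₄*(α₃ ω - m₃)) μ := iβ₃.const_mul _
  have ic₄ : Integrable (fun ω => m₂*m₃*(α₄ ω - m₄)) μ := iβ₄.const_mul _
  have ic₂₃ : Integrable (fun ω => m₃*m₄*(α₂ ω - m₂) + m₂*m₄*(α₃ ω - m₃)) μ := ic₂.add ic₃
  have ic₂₃₄ : Integrable (fun ω => m₃*m₄*(α₂ ω - m₂) + m₂*m₄*(α₃ ω - m₃)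
      + m₂*m₃*(α₄ ω - m₄)) μ := ic₂₃.add ic₄
  have e1 : ∫ ω, (m₃*m₄*(α₂ ω - m₂) + m₂*m₄*(α₃ ω - m₃) + m₂*m₃*(α₄ ω - m₄)) ∂μ = 0 := by
    rw [integral_add ic₂₃ ic₄, integral_add ic₂ ic₃, integral_const_mul, integral_const_mul,
      integral_const_mul, hIβ₂, hIβ₃, hIβ₄]
    ring
  have hIZ : ∫ ω, Z ω ∂μ = 0 := by
    have e0 : ∫ ω, Z ω ∂μ = ∫ ω, ((α₁ ω - m₁) - (m₃*m₄*(α₂ ω - m₂) + m₂*m₄*(α₃ ω - m₃)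
        + m₂*m₃*(α₄ ω - m₄))) ∂μ :=
      integral_congr_ae (Filter.Eventually.of_forall fun ω => by simp only [hZdef]; ring)
    rw [e0, integral_sub iβ₁ ic₂₃₄, hIβ₁, e1, sub_zero]
  -- Memℒp 2 facts
  have mem2A : MemLp (fun ω => α₁ ω - α₂ ω * α₃ ω * α₄ ω) 2 μ := by
    refine MemLp.of_bound ((h₁.sub ((h₂.mul h₃).mul h₄)).aestronglyMeasurable) (M + M^3) ?_
    filter_upwards [hb₁, hb₂, hb₃, hb₄] with ω w1 w2 w3 w4
    rw [Real.norm_eq_abs]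
    have k := key3 (α₂ ω) (α₃ ω) (α₄ ω) w2 w3 w4
    have t := abs_sub (α₁ ω) (α₂ ω * α₃ ω * α₄ ω)
    linarith
  have mem2B : MemLp (fun ω => α₁ ω - α₂ ω * m₃ * m₄ - α₃ ω * m₂ * m₄ - α₄ ω * m₂ * m₃) 2 μ := by
    refine MemLp.of_bound
      ((((h₁.sub ((h₂.mul_const m₃).mul_const m₄)).sub
        ((h₃.mul_const m₂).mul_const m₄)).sub
        ((h₄.mul_const m₂).mul_const m₃)).aestronglyMeasurable) (M + 3*M^3) ?_
    filter_upwards [hb₁, hb₂, hb₃, hb₄] with ω w1 w2 w3 w4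
    rw [Real.norm_eq_abs]
    have k2 := key3 (α₂ ω) m₃ m₄ w2 hm₃M hm₄M
    have k3 := key3 (α₃ ω) m₂ m₄ w3 hm₂M hm₄M
    have k4 := key3 (α₄ ω) m₂ m₃ w4 hm₂M hm₃M
    have t := abs4s (α₁ ω) (α₂ ω * m₃ * m₄) (α₃ ω * m₂ * m₄) (α₄ ω * m₂ * m₃)
    linarith
  -- mean of A
  have hAeq : (fun ω => α₁ ω - α₂ ω * α₃ ω * α₄ ω)
      = fun ω => Z ω - R ω + (m₁ - m₂*(m₃*m₄)) := by
    funext ω; simp only [hZdef, hRdef]; ring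
  have iZmR : Integrable (fun ω => Z ω - R ω) μ := iZ.sub iR
  have hIA : ∫ ω, (α₁ ω - α₂ ω * α₃ ω * α₄ ω) ∂μ = (m₁ - m₂*(m₃*m₄)) - r := by
    have e0 : ∫ ω, (α₁ ω - α₂ ω * α₃ ω * α₄ ω) ∂μ
        = ∫ ω, ((Z ω - R ω) + (m₁ - m₂*(m₃*m₄))) ∂μ :=
      integral_congr_ae (Filter.Eventually.of_forall fun ω => by
        simp only [hZdef, hRdef]; ring)
    rw [e0, integral_add iZmR (integrable_const _), integral_sub iZ iR, hIZ, integral_const,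
      ← hrdef]
    simp
    ring
  have hBeq : (fun ω => α₁ ω - α₂ ω * m₃ * m₄ - α₃ ω * m₂ * m₄ - α₄ ω * m₂ * m₃)
      = fun ω => Z ω + (m₁ - 3*(m₂*(m₃*m₄))) := by
    funext ω; simp only [hZdef]; ring
  have hIB : ∫ ω, (α₁ ω - α₂ ω * m₃ * m₄ - α₃ ω * m₂ * m₄ - α₄ ω * m₂ * m₃) ∂μ
      = m₁ - 3*(m₂*(m₃*m₄)) := by
    have e0 : ∫ ω, (α₁ ω - α₂ ω * m₃ * m₄ - α₃ ω * m₂ * m₄ - α₄ ω * m₂ * m₃) ∂μ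
        = ∫ ω, (Z ω + (m₁ - 3*(m₂*(m₃*m₄)))) ∂μ :=
      integral_congr_ae (Filter.Eventually.of_forall fun ω => by simp only [hZdef]; ring)
    rw [e0, integral_add iZ (integrable_const _), hIZ, integral_const]
    simp
  -- variance formulas
  have varA : variance (fun ω => α₁ ω - α₂ ω * α₃ ω * α₄ ω) μ
      = ∫ ω, (Z ω - R ω + r) ^ 2 ∂μ := by
    rw [variance_eq_integral mem2A.aemeasurable]
    refine integral_congr_ae (Filter.Eventually.of_forall fun ω => ?_)
    simp only [Pi.pow_apply, Pi.sub_apply, hIA, hZdef, hRdef]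
    ring
  have varB : variance (fun ω =>
      α₁ ω - α₂ ω * m₃ * m₄ - α₃ ω * m₂ * m₄ - α₄ ω * m₂ * m₃) μ
      = ∫ ω, (Z ω) ^ 2 ∂μ := by
    rw [variance_eq_integral mem2B.aemeasurable]
    refine integral_congr_ae (Filter.Eventually.of_forall fun ω => ?_)
    simp only [Pi.pow_apply, Pi.sub_apply, hIB, hZdef]
    ring
  -- key identity
  have key : variance (fun ω => α₁ ω - α₂ ω * α₃ ω * α₄ ω) μ
      - variance (fun ω =>
          α₁ ω - α₂ ω * m₃ * m₄ - α₃ ω * m₂ * m₄ - α₄ ω * m₂ * m₃) μ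
      = (∫ ω, (R ω - r) ^ 2 ∂μ) - 2*(∫ ω, Z ω * R ω ∂μ) := by
    have iP : Integrable (fun ω => (R ω - r) ^ 2 - 2*(Z ω * R ω)) μ :=
      iRr2.sub (iZR.const_mul 2)
    rw [varA, varB, ← integral_sub iZRr2 iZ2]
    calc ∫ ω, ((Z ω - R ω + r) ^ 2 - Z ω ^ 2) ∂μ
        = ∫ ω, (((R ω - r) ^ 2 - 2*(Z ω * R ω)) + (2*r)*Z ω) ∂μ :=
          integral_congr_ae (Filter.Eventually.of_forall fun ω => by ring)
      _ = (∫ ω, ((R ω - r) ^ 2 - 2*(Z ω * R ω)) ∂μ) + ∫ ω, (2*r)*Z ω ∂μ :=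
          integral_add iP (iZ.const_mul (2*r))
      _ = (∫ ω, (R ω - r) ^ 2 ∂μ) - 2*(∫ ω, Z ω * R ω ∂μ) := by
          rw [integral_sub iRr2 (iZR.const_mul 2), integral_const_mul, integral_const_mul, hIZ]
          ring
  have hJ : ∫ ω, (R ω - r) ^ 2 ∂μ = (∫ ω, R ω ^ 2 ∂μ) - r^2 := by
    calc ∫ ω, (R ω - r) ^ 2 ∂μ
        = ∫ ω, ((R ω ^ 2 - (2*r)*R ω) + r^2) ∂μ :=
          integral_congr_ae (Filter.Eventually.of_forall fun ω => by ring)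
      _ = (∫ ω, (R ω ^ 2 - (2*r)*R ω) ∂μ) + ∫ ω, (r^2 : ℝ) ∂μ :=
          integral_add (show Integrable (fun ω => R ω ^ 2 - (2*r)*R ω) μ from
            iR2.sub (iR.const_mul (2*r))) (integrable_const _)
      _ = (∫ ω, R ω ^ 2 ∂μ) - r^2 := by
          rw [integral_sub iR2 (iR.const_mul (2*r)), integral_const_mul, ← hrdef,
            integral_const]
          simp
          ring
  have hJ0 : 0 ≤ ∫ ω, (R ω - r) ^ 2 ∂μ := integral_nonneg fun ω => sq_nonneg _
  have habsZR : |∫ ω, Z ω * R ω ∂μ| ≤ ∫ ω, |Z ω * R ω| ∂μ := by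
    rw [← Real.norm_eq_abs]
    refine (norm_integral_le_integral_norm _).trans (le_of_eq ?_)
    exact integral_congr_ae (Filter.Eventually.of_forall fun ω => Real.norm_eq_abs _)
  have hIabs0 : 0 ≤ ∫ ω, |Z ω * R ω| ∂μ := integral_nonneg fun ω => abs_nonneg _
  have hineq1 : |variance (fun ω => α₁ ω - α₂ ω * α₃ ω * α₄ ω) μ
      - variance (fun ω =>
          α₁ ω - α₂ ω * m₃ * m₄ - α₃ ω * m₂ * m₄ - α₄ ω * m₂ * m₃) μ|
      ≤ (∫ ω, R ω ^ 2 ∂μ) + 2*(∫ ω, |Z ω * R ω| ∂μ) := by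
    rw [key, abs_le]
    have l1 : (∫ ω, Z ω * R ω ∂μ) ≤ ∫ ω, |Z ω * R ω| ∂μ := (le_abs_self _).trans habsZR
    have l2 : -(∫ ω, |Z ω * R ω| ∂μ) ≤ ∫ ω, Z ω * R ω ∂μ := by
      have := neg_abs_le (∫ ω, Z ω * R ω ∂μ); linarith
    constructor
    · linarith [hJ, hJ0, sq_nonneg r]
    · linarith [hJ, sq_nonneg r]
  -- pointwise cubic bound
  have hpt : ∀ᵐ ω ∂μ, R ω ^ 2 + 2*|Z ω * R ω|
      ≤ (54*M + 648*M^3) * (|α₁ ω - m₁| ^ 3 + |α₂ ω - m₂| ^ 3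
        + |α₃ ω - m₃| ^ 3 + |α₄ ω - m₄| ^ 3) := by
    filter_upwards [hae, hRbd] with ω hw hRω
    obtain ⟨w1, w2, w3, w4⟩ := hw
    have hZω := hZbd ω
    have hzr : |Z ω * R ω| = |Z ω| * |R ω| := abs_mul _ _
    have hZRb : |Z ω| * |R ω|
        ≤ (|α₁ ω - m₁| + M^2*(|α₂ ω - m₂| + |α₃ ω - m₃| + |α₄ ω - m₄|))
          * (3*M*(|α₂ ω - m₂| * |α₃ ω - m₃| + |α₂ ω - m₂| * |α₄ ω - m₄|
              + |α₃ ω - m₃| * |α₄ ω - m₄|)) :=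
      mul_le_mul hZω hRω (abs_nonneg _) (by positivity)
    have hR2b : R ω ^ 2 ≤ (3*M*(|α₂ ω - m₂| * |α₃ ω - m₃| + |α₂ ω - m₂| * |α₄ ω - m₄|
        + |α₃ ω - m₃| * |α₄ ω - m₄|)) ^ 2 := by
      rw [← sq_abs (R ω)]
      exact pow_le_pow_left₀ (abs_nonneg _) hRω 2
    have main := poly_bound (M := M) (b1 := |α₁ ω - m₁|) (b2 := |α₂ ω - m₂|)
      (b3 := |α₃ ω - m₃|) (b4 := |α₄ ω - m₄|) hM
      (abs_nonneg _) (abs_nonneg _) (abs_nonneg _) (abs_nonneg _) w2 w3 w4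
    linarith
  have hsum : ∫ ω, (R ω ^ 2 + 2*|Z ω * R ω|) ∂μ
      = (∫ ω, R ω ^ 2 ∂μ) + 2*(∫ ω, |Z ω * R ω| ∂μ) := by
    rw [integral_add iR2 (iaZR.const_mul 2), integral_const_mul]
  have hCS : Integrable (fun ω => (54*M + 648*M^3) * (|α₁ ω - m₁| ^ 3 + |α₂ ω - m₂| ^ 3
      + |α₃ ω - m₃| ^ 3 + |α₄ ω - m₄| ^ 3)) μ :=
    ((((icube₁.add icube₂).add icube₃).add icube₄).const_mul _)
  have iRsum : Integrable (fun ω => R ω ^ 2 + 2*|Z ω * R ω|) μ := iR2.add (iaZR.const_mul 2)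
  have hmono2 : ∫ ω, (R ω ^ 2 + 2*|Z ω * R ω|) ∂μ
      ≤ ∫ ω, (54*M + 648*M^3) * (|α₁ ω - m₁| ^ 3 + |α₂ ω - m₂| ^ 3
        + |α₃ ω - m₃| ^ 3 + |α₄ ω - m₄| ^ 3) ∂μ :=
    integral_mono_ae iRsum hCS hpt
  have hfin : ∫ ω, (54*M + 648*M^3) * (|α₁ ω - m₁| ^ 3 + |α₂ ω - m₂| ^ 3
      + |α₃ ω - m₃| ^ 3 + |α₄ ω - m₄| ^ 3) ∂μ
      = (54*M + 648*M^3) * ((∫ ω, |α₁ ω - m₁| ^ 3 ∂μ) + (∫ ω, |α₂ ω - m₂| ^ 3 ∂μ)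
        + (∫ ω, |α₃ ω - m₃| ^ 3 ∂μ) + (∫ ω, |α₄ ω - m₄| ^ 3 ∂μ)) := by
    have iS12 : Integrable (fun ω => |α₁ ω - m₁| ^ 3 + |α₂ ω - m₂| ^ 3) μ := icube₁.add icube₂
    have iS123 : Integrable (fun ω => |α₁ ω - m₁| ^ 3 + |α₂ ω - m₂| ^ 3 + |α₃ ω - m₃| ^ 3) μ :=
      iS12.add icube₃
    rw [integral_const_mul, integral_add iS123 icube₄, integral_add iS12 icube₃,
      integral_add icube₁ icube₂]
  calc |variance (fun ω => α₁ ω - α₂ ω * α₃ ω * α₄ ω) μ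
      - variance (fun ω =>
          α₁ ω - α₂ ω * m₃ * m₄ - α₃ ω * m₂ * m₄ - α₄ ω * m₂ * m₃) μ|
      ≤ (∫ ω, R ω ^ 2 ∂μ) + 2*(∫ ω, |Z ω * R ω| ∂μ) := hineq1
    _ = ∫ ω, (R ω ^ 2 + 2*|Z ω * R ω|) ∂μ := hsum.symm
    _ ≤ ∫ ω, (54*M + 648*M^3) * (|α₁ ω - m₁| ^ 3 + |α₂ ω - m₂| ^ 3
        + |α₃ ω - m₃| ^ 3 + |α₄ ω - m₄| ^ 3) ∂μ := hmono2
    _ = (54*M + 648*M^3) * ((∫ ω, |α₁ ω - m₁| ^ 3 ∂μ) + (∫ ω, |α₂ ω - m₂| ^ 3 ∂μ)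
        + (∫ ω, |α₃ ω - m₃| ^ 3 ∂μ) + (∫ ω, |α₄ ω - m₄| ^ 3 ∂μ)) := hfin
end
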